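/- Assume q*(x) = N(x | 0, Σ) with non-singular Σ, p*(y|x) = N(y | xᵀθ*, σ²) and p_θ(y|x) = N(y | xᵀθ, σ²), and λ ∈ (0,1). Then the Rényi divergence has the closed form d_λ(p*, p_θ) = (1/(2(1−λ))) log( 1 + ‖Σ^{1/2}(θ−θ*)‖₂² / c ), where c = σ²/(λ(1−λ)). Equivalently, the normalization constant Z^λ_θ = ∫ q*(x) p*(y|x)^λ p_θ(y|x)^{1−λ} dx dy equals ( c/(c+‖Σ^{1/2}(θ−θ*)‖₂²) )^{1/2}. -/

import Mathlib

open MeasureTheory Matrix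

/-- Density of the `p`-dimensional centered Gaussian `N(0, S)` w.r.t. Lebesgue measure. -/
noncomputable def gaussPdf {p : ℕ} (S : Matrix (Fin p) (Fin p) ℝ) (x : Fin p → ℝ) : ℝ :=
  Real.exp (-(x ⬝ᵥ S⁻¹ *ᵥ x) / 2) / Real.sqrt ((2 * Real.pi) ^ p * S.det)

/-- Density of the one-dimensional Gaussian `N(m, s2)`. -/
noncomputable def gauss1 (m s2 y : ℝ) : ℝ :=
  Real.exp (-((y - m) ^ 2) / (2 * s2)) / Real.sqrt (2 * Real.pi * s2)

open Complex Real


lemma intA {c : ℝ} (hc : 0 < c) (a : ℝ) :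
    ∫ t : ℝ, cexp (((-(c/2) : ℝ) : ℂ) * t^2 + (Complex.I * a) * t) =
      (Real.sqrt (2*Real.pi/c) : ℂ) * (Real.exp (-a^2/(2*c)) : ℂ) := by
  have hb : ((( -(c/2) : ℝ) : ℂ)).re < 0 := by simpa using by linarith
  have h := integral_cexp_quadratic hb (Complex.I * a) 0
  simp only [add_zero] at h
  rw [h]
  congr 1
  · rw [show (↑Real.pi / -((↑(-(c/2)) : ℂ))) = ((2*Real.pi/c : ℝ) : ℂ) by
      push_cast; field_simp]
    rw [Real.sqrt_eq_rpow, Complex.ofReal_cpow (by positivity)]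
    norm_num
  · have h2 : (0 : ℂ) - (Complex.I * ↑a) ^ 2 / (4 * ↑(-(c/2)) : ℂ) = ((-a^2/(2*c) : ℝ) : ℂ) := by
      have hc' : (c : ℂ) ≠ 0 := by exact_mod_cast hc.ne'
      have h3 : (Complex.I * ↑a) ^ 2 = -(a:ℂ)^2 := by rw [mul_pow, Complex.I_sq]; ring
      rw [h3]
      push_cast
      field_simp
      ring
    rw [h2, Complex.ofReal_exp]

lemma dot_self_nonneg {p : ℕ} (u : Fin p → ℝ) : 0 ≤ u ⬝ᵥ u :=
  Finset.sum_nonneg fun i _ => mul_self_nonneg _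

lemma cont_dot {p : ℕ} (w : Fin p → ℝ) : Continuous fun u : Fin p → ℝ => u ⬝ᵥ w :=
  continuous_finset_sum _ fun i _ => (continuous_apply i).mul continuous_const

lemma cont_dot_self {p : ℕ} : Continuous fun u : Fin p → ℝ => u ⬝ᵥ u :=
  continuous_finset_sum _ fun i _ => (continuous_apply i).mul (continuous_apply i)

lemma int_gauss_pi {p : ℕ} : Integrable (fun u : Fin p → ℝ => rexp (-(u ⬝ᵥ u)/2)) := by
  have h : (fun u : Fin p → ℝ => rexp (-(u ⬝ᵥ u)/2))
      = fun u => ∏ i, rexp (-(1/2) * (u i)^2) := by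
    funext u
    rw [← Real.exp_sum]
    congr 1
    simp only [dotProduct, neg_div, Finset.sum_div, ← Finset.sum_neg_distrib]
    exact Finset.sum_congr rfl fun i _ => by ring
  rw [h]
  exact Integrable.fintype_prod fun _ => integrable_exp_neg_mul_sq (by norm_num)

/-- complexified integrand for the Fubini step -/
noncomputable def FF {p : ℕ} (c : ℝ) (w : Fin p → ℝ) (u : Fin p → ℝ) (t : ℝ) : ℂ :=
  cexp (((-(c/2) : ℝ) : ℂ) * t^2 + (Complex.I * (u ⬝ᵥ w)) * t + ((-(u ⬝ᵥ u)/2 : ℝ) : ℂ))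

lemma intB (p : ℕ) {c : ℝ} (hc : 0 < c) (w : Fin p → ℝ) :
    ∫ u : Fin p → ℝ, Real.exp (-(u ⬝ᵥ w)^2 / (2*c)) *
        (Real.exp (-(u ⬝ᵥ u)/2) / Real.sqrt ((2*Real.pi)^p)) =
      Real.sqrt (c / (c + w ⬝ᵥ w)) := by
  have hv0 : 0 ≤ w ⬝ᵥ w := dot_self_nonneg w
  have hcv : 0 < c + w ⬝ᵥ w := by linarith
  have hπ : (0:ℝ) < 2*Real.pi := by positivity
  have hk0 : 0 < Real.sqrt (2*Real.pi/c) := Real.sqrt_pos.mpr (by positivity)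
  have hkc : ((Real.sqrt (2*Real.pi/c) : ℝ) : ℂ) ≠ 0 := by exact_mod_cast hk0.ne'
  -- pointwise identity
  have key : ∀ u : Fin p → ℝ,
      ((rexp (-(u ⬝ᵥ w)^2 / (2*c)) * rexp (-(u ⬝ᵥ u)/2) : ℝ) : ℂ)
        = ((Real.sqrt (2*Real.pi/c) : ℝ) : ℂ)⁻¹ * ∫ t : ℝ, FF c w u t := by
    intro u
    have h2 : (∫ t : ℝ, FF c w u t)
        = (∫ t : ℝ, cexp (((-(c/2) : ℝ) : ℂ) * t^2 + (Complex.I * (u ⬝ᵥ w)) * t)) *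
          ((rexp (-(u ⬝ᵥ u)/2) : ℝ) : ℂ) := by
      rw [← integral_mul_const]
      congr 1; funext t
      rw [FF, Complex.ofReal_exp, ← Complex.exp_add]
    rw [h2, intA hc (u ⬝ᵥ w), Complex.ofReal_mul, ← mul_assoc, ← mul_assoc,
      inv_mul_cancel₀ hkc, one_mul]
  -- Fubini
  have hFcont : Continuous (Function.uncurry (FF c w)) := by
    apply Continuous.cexp
    refine Continuous.add (Continuous.add ?_ ?_) ?_
    · exact continuous_const.mul ((Complex.continuous_ofReal.comp continuous_snd).pow 2)
    · exact (continuous_const.mul (Complex.continuous_ofReal.comp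
        ((cont_dot w).comp continuous_fst))).mul (Complex.continuous_ofReal.comp continuous_snd)
    · exact Complex.continuous_ofReal.comp
        (((cont_dot_self).comp continuous_fst).neg.div_const 2)
  have hFint : Integrable (Function.uncurry (FF c w))
      ((volume : Measure (Fin p → ℝ)).prod volume) := by
    apply Integrable.mono' ((int_gauss_pi (p := p)).mul_prod
      (integrable_exp_neg_mul_sq (b := c/2) (by positivity)))
    · exact hFcont.aestronglyMeasurable
    · refine Filter.Eventually.of_forall fun z => ?_
      rw [Function.uncurry, FF, Complex.norm_exp]
      have : (((-(c/2) : ℝ) : ℂ) * (z.2:ℂ)^2 + (Complex.I * (z.1 ⬝ᵥ w)) * z.2 +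
          ((-(z.1 ⬝ᵥ z.1)/2 : ℝ) : ℂ)).re = -(z.1 ⬝ᵥ z.1)/2 + (-(c/2) * z.2^2) := by
        simp [← Complex.ofReal_pow, Complex.add_re, Complex.mul_re]
        ring
      rw [this, Real.exp_add]
  -- inner u-integral after swapping
  have inner : ∀ t : ℝ, (∫ u : Fin p → ℝ, FF c w u t)
      = ((Real.sqrt (2*Real.pi) : ℝ) : ℂ)^p *
        cexp (((-((c + w ⬝ᵥ w)/2) : ℝ) : ℂ) * (t:ℂ)^2) := by
    intro t
    have hsplit : ∀ u : Fin p → ℝ, FF c w u t =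
        cexp (-∑ i, (1/2 : ℂ) * (u i : ℂ)^2 + ∑ i, (Complex.I * t * w i) * (u i : ℂ)) *
          cexp (((-(c/2) : ℝ) : ℂ) * (t:ℂ)^2) := by
      intro u
      rw [FF, ← Complex.exp_add]
      congr 1
      have hd : ((u ⬝ᵥ w : ℝ) : ℂ) = ∑ i, (u i : ℂ) * (w i : ℂ) := by
        rw [dotProduct]; push_cast; rfl
      have hd2 : ((u ⬝ᵥ u : ℝ) : ℂ) = ∑ i, (u i : ℂ) * (u i : ℂ) := by
        rw [dotProduct]; push_cast; rfl
      have e1 : Complex.I * ((u ⬝ᵥ w : ℝ) : ℂ) * (t:ℂ)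
          = ∑ i, (Complex.I * t * w i) * (u i : ℂ) := by
        rw [hd, Finset.mul_sum, Finset.sum_mul]
        exact Finset.sum_congr rfl fun i _ => by ring
      have e2 : ((-(u ⬝ᵥ u)/2 : ℝ) : ℂ) = -∑ i, (1/2 : ℂ) * (u i : ℂ)^2 := by
        push_cast [hd2]
        rw [neg_div, Finset.sum_div, neg_inj]
        exact Finset.sum_congr rfl fun i _ => by ring
      rw [e1, e2]
      ring
    calc (∫ u : Fin p → ℝ, FF c w u t)
        = (∫ u : Fin p → ℝ, cexp (-∑ i, (1/2 : ℂ) * (u i : ℂ)^2 +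
            ∑ i, (Complex.I * t * w i) * (u i : ℂ))) *
          cexp (((-(c/2) : ℝ) : ℂ) * (t:ℂ)^2) := by
          rw [← integral_mul_const]; exact integral_congr_ae (.of_forall hsplit)
      _ = (∏ i, ((Real.pi : ℂ) / (1/2)) ^ (1/2 : ℂ) *
            cexp ((Complex.I * t * w i)^2 / (4 * (1/2)))) *
          cexp (((-(c/2) : ℝ) : ℂ) * (t:ℂ)^2) := by
          rw [GaussianFourier.integral_cexp_neg_sum_mul_add (fun _ => by norm_num)
            (fun i => Complex.I * t * w i)]
      _ = ((Real.sqrt (2*Real.pi) : ℝ) : ℂ)^p *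
          cexp (((-((c + w ⬝ᵥ w)/2) : ℝ) : ℂ) * (t:ℂ)^2) := by
        rw [Finset.prod_mul_distrib, Finset.prod_const, ← Complex.exp_sum, mul_assoc,
          ← Complex.exp_add]
        congr 1
        · congr 1
          · rw [show ((Real.pi : ℂ) / (1/2)) = ((2*Real.pi : ℝ) : ℂ) by push_cast; ring,
              Real.sqrt_eq_rpow, Complex.ofReal_cpow hπ.le]
            norm_num
          · simp
        · congr 1
          have hterm : ∀ i ∈ Finset.univ, (Complex.I * t * w i)^2 / (4 * (1/2 : ℂ))
              = -(t:ℂ)^2 * ((w i : ℂ) * (w i : ℂ)) / 2 := by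
            intro i _
            rw [mul_pow, mul_pow, Complex.I_sq]
            ring
          have hd : ((w ⬝ᵥ w : ℝ) : ℂ) = ∑ i, (w i : ℂ) * (w i : ℂ) := by
            rw [dotProduct]; push_cast; rfl
          rw [Finset.sum_congr rfl hterm, ← Finset.sum_div, ← Finset.mul_sum, ← hd]
          push_cast
          ring
  -- put everything together, in ℂ
  have hJ : ((∫ u : Fin p → ℝ, rexp (-(u ⬝ᵥ w)^2 / (2*c)) * rexp (-(u ⬝ᵥ u)/2) : ℝ) : ℂ)
      = ((Real.sqrt (2*Real.pi/c) : ℝ) : ℂ)⁻¹ * (((Real.sqrt (2*Real.pi) : ℝ) : ℂ)^p *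
          ((Real.sqrt (2*Real.pi/(c + w ⬝ᵥ w)) : ℝ) : ℂ)) := by
    calc ((∫ u : Fin p → ℝ, rexp (-(u ⬝ᵥ w)^2 / (2*c)) * rexp (-(u ⬝ᵥ u)/2) : ℝ) : ℂ)
        = ∫ u : Fin p → ℝ, ((rexp (-(u ⬝ᵥ w)^2 / (2*c)) * rexp (-(u ⬝ᵥ u)/2) : ℝ) : ℂ) :=
          integral_ofReal.symm
      _ = ∫ u : Fin p → ℝ, ((Real.sqrt (2*Real.pi/c) : ℝ) : ℂ)⁻¹ * ∫ t : ℝ, FF c w u t := by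
          exact integral_congr_ae (.of_forall key)
      _ = ((Real.sqrt (2*Real.pi/c) : ℝ) : ℂ)⁻¹ * ∫ u : Fin p → ℝ, ∫ t : ℝ, FF c w u t :=
          integral_const_mul _ _
      _ = ((Real.sqrt (2*Real.pi/c) : ℝ) : ℂ)⁻¹ * ∫ t : ℝ, ∫ u : Fin p → ℝ, FF c w u t := by
          rw [integral_integral_swap hFint]
      _ = ((Real.sqrt (2*Real.pi/c) : ℝ) : ℂ)⁻¹ * (((Real.sqrt (2*Real.pi) : ℝ) : ℂ)^p *
          ((Real.sqrt (2*Real.pi/(c + w ⬝ᵥ w)) : ℝ) : ℂ)) := by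
          congr 1
          calc ∫ t : ℝ, ∫ u : Fin p → ℝ, FF c w u t
              = ∫ t : ℝ, ((Real.sqrt (2*Real.pi) : ℝ) : ℂ)^p *
                  cexp (((-((c + w ⬝ᵥ w)/2) : ℝ) : ℂ) * (t:ℂ)^2) :=
                integral_congr_ae (.of_forall inner)
            _ = ((Real.sqrt (2*Real.pi) : ℝ) : ℂ)^p *
                ∫ t : ℝ, cexp (((-((c + w ⬝ᵥ w)/2) : ℝ) : ℂ) * (t:ℂ)^2) :=
                integral_const_mul _ _
            _ = ((Real.sqrt (2*Real.pi) : ℝ) : ℂ)^p *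
                ((Real.sqrt (2*Real.pi/(c + w ⬝ᵥ w)) : ℝ) : ℂ) := by
                congr 1
                have h0 := intA hcv 0
                simp only [Complex.ofReal_zero, mul_zero, zero_mul, add_zero,
                  ne_eq, OfNat.ofNat_ne_zero, not_false_eq_true, zero_pow, neg_zero,
                  zero_div, Real.exp_zero, Complex.ofReal_one, mul_one] at h0
                exact h0
  -- back to the reals
  have hJr : (∫ u : Fin p → ℝ, rexp (-(u ⬝ᵥ w)^2 / (2*c)) * rexp (-(u ⬝ᵥ u)/2))
      = (Real.sqrt (2*Real.pi/c))⁻¹ * (Real.sqrt (2*Real.pi)^p *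
          Real.sqrt (2*Real.pi/(c + w ⬝ᵥ w))) := by
    have := hJ
    rw [← Complex.ofReal_pow, ← Complex.ofReal_inv, ← Complex.ofReal_mul,
      ← Complex.ofReal_mul] at this
    exact_mod_cast this
  simp_rw [div_eq_mul_inv, ← mul_assoc]
  rw [MeasureTheory.integral_mul_const]
  rw [show (fun u : Fin p → ℝ => rexp (-(u ⬝ᵥ w)^2 * (2*c)⁻¹) * rexp (-(u ⬝ᵥ u) * 2⁻¹))
    = fun u => rexp (-(u ⬝ᵥ w)^2 / (2*c)) * rexp (-(u ⬝ᵥ u)/2) by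
      funext u; rw [div_eq_mul_inv, div_eq_mul_inv], hJr]
  have hsp : Real.sqrt ((2*Real.pi)^p) = Real.sqrt (2*Real.pi) ^ p := by
    rw [Real.sqrt_eq_rpow, Real.sqrt_eq_rpow, ← Real.rpow_natCast (2*Real.pi) p,
      ← Real.rpow_mul hπ.le, mul_comm (p:ℝ) (1/2), Real.rpow_mul hπ.le, Real.rpow_natCast]
  rw [hsp]
  have hS : Real.sqrt (2*Real.pi) ^ p ≠ 0 :=
    pow_ne_zero _ (Real.sqrt_ne_zero'.mpr hπ)
  have hcancel : (Real.sqrt (2*Real.pi/c))⁻¹ * (Real.sqrt (2*Real.pi)^p *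
      Real.sqrt (2*Real.pi/(c + w ⬝ᵥ w))) * (Real.sqrt (2*Real.pi)^p)⁻¹
      = (Real.sqrt (2*Real.pi/c))⁻¹ * Real.sqrt (2*Real.pi/(c + w ⬝ᵥ w)) := by
    field_simp
  rw [hcancel, ← Real.sqrt_inv, ← Real.sqrt_mul (by positivity)]
  congr 1
  have hπ0 : Real.pi ≠ 0 := Real.pi_ne_zero
  field_simp




lemma cont_quad {p : ℕ} (A : Matrix (Fin p) (Fin p) ℝ) :
    Continuous fun x : Fin p → ℝ => x ⬝ᵥ A *ᵥ x := by
  have h : (fun x : Fin p → ℝ => x ⬝ᵥ A *ᵥ x)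
      = fun x => ∑ i, x i * ∑ j, A i j * x j := by
    funext x; simp [dotProduct, Matrix.mulVec]
  rw [h]
  exact continuous_finset_sum _ fun i _ => (continuous_apply i).mul
    (continuous_finset_sum _ fun j _ => continuous_const.mul (continuous_apply j))

lemma cont_gaussPdf {p : ℕ} (S : Matrix (Fin p) (Fin p) ℝ) : Continuous (gaussPdf S) :=
  (Real.continuous_exp.comp ((cont_quad S⁻¹).neg.div_const 2)).div_const _

lemma mulVec_dot_symm {p : ℕ} {R : Matrix (Fin p) (Fin p) ℝ} (hsym : R.transpose = R)
    (y z : Fin p → ℝ) : (R *ᵥ y) ⬝ᵥ z = y ⬝ᵥ (R *ᵥ z) := by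
  have h : R *ᵥ y = y ᵥ* R := by
    conv_lhs => rw [← hsym]
    exact Matrix.mulVec_transpose R y
  rw [h, Matrix.dotProduct_mulVec]

/-- change of variables `x = R u` for the Gaussian integral -/
lemma chgvar {p : ℕ} (Sig R : Matrix (Fin p) (Fin p) ℝ) (hSig : Sig.PosDef)
    (hR : R.PosSemidef) (hRsq : R * R = Sig) (f : (Fin p → ℝ) → ℝ) (hf : Continuous f) :
    ∫ x : Fin p → ℝ, f x * gaussPdf Sig x
      = ∫ u : Fin p → ℝ, f (R *ᵥ u) * (rexp (-(u ⬝ᵥ u)/2) / Real.sqrt ((2*Real.pi)^p)) := by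
  have hSd : 0 < Sig.det := hSig.det_pos
  have hdet : R.det * R.det = Sig.det := by rw [← Matrix.det_mul, hRsq]
  have hRd : R.det ≠ 0 := by
    intro h
    rw [h, mul_zero] at hdet
    exact hSd.ne' hdet.symm
  have hU : IsUnit R.det := isUnit_iff_ne_zero.mpr hRd
  have hsym : R.transpose = R := hR.isHermitian
  have habs : |R.det| = Real.sqrt Sig.det := by
    rw [← Real.sqrt_sq_eq_abs, sq, hdet]
  have hSd' : Real.sqrt Sig.det ≠ 0 := by positivity
  -- the quadratic form identity
  have hquad : ∀ u : Fin p → ℝ, (R *ᵥ u) ⬝ᵥ Sig⁻¹ *ᵥ (R *ᵥ u) = u ⬝ᵥ u := by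
    intro u
    have h1 : Sig⁻¹ *ᵥ (R *ᵥ u) = R⁻¹ *ᵥ u := by
      rw [Matrix.mulVec_mulVec, ← hRsq, Matrix.mul_inv_rev, Matrix.mul_assoc,
        Matrix.nonsing_inv_mul R hU, Matrix.mul_one]
    rw [h1, mulVec_dot_symm hsym, Matrix.mulVec_mulVec, Matrix.mul_nonsing_inv R hU,
      Matrix.one_mulVec]
  have hpdf : ∀ u : Fin p → ℝ, gaussPdf Sig (R *ᵥ u)
      = rexp (-(u ⬝ᵥ u)/2) / (Real.sqrt ((2*Real.pi)^p) * Real.sqrt Sig.det) := by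
    intro u
    rw [gaussPdf, hquad, Real.sqrt_mul (by positivity)]
  -- change of variables
  have hg : Continuous fun x => f x * gaussPdf Sig x := hf.mul (cont_gaussPdf Sig)
  have hdet' : LinearMap.det (Matrix.toLin' R) ≠ 0 := by
    rwa [LinearMap.det_toLin']
  have hmap := Real.map_linearMap_volume_pi_eq_smul_volume_pi hdet'
  have step : ∫ u : Fin p → ℝ, f (R *ᵥ u) * gaussPdf Sig (R *ᵥ u)
      = |R.det|⁻¹ * ∫ x : Fin p → ℝ, f x * gaussPdf Sig x := by
    calc ∫ u : Fin p → ℝ, f (R *ᵥ u) * gaussPdf Sig (R *ᵥ u)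
        = ∫ u : Fin p → ℝ, (fun x => f x * gaussPdf Sig x) (Matrix.toLin' R u) := by
          simp only [Matrix.toLin'_apply]
      _ = ∫ x, (fun x => f x * gaussPdf Sig x) x ∂(Measure.map (Matrix.toLin' R) volume) :=
          (integral_map ((Matrix.toLin' R).continuous_of_finiteDimensional).measurable.aemeasurable
            hg.aestronglyMeasurable).symm
      _ = ∫ x, (fun x => f x * gaussPdf Sig x) x
            ∂(ENNReal.ofReal |(LinearMap.det (Matrix.toLin' R))⁻¹| • volume) := by rw [hmap]
      _ = |R.det|⁻¹ * ∫ x : Fin p → ℝ, f x * gaussPdf Sig x := by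
          rw [integral_smul_measure, ENNReal.toReal_ofReal (abs_nonneg _),
            LinearMap.det_toLin', abs_inv, smul_eq_mul]
  have habs0 : |R.det| ≠ 0 := abs_ne_zero.mpr hRd
  calc ∫ x : Fin p → ℝ, f x * gaussPdf Sig x
      = |R.det| * ∫ u : Fin p → ℝ, f (R *ᵥ u) * gaussPdf Sig (R *ᵥ u) := by
        rw [step, ← mul_assoc, mul_inv_cancel₀ habs0, one_mul]
    _ = ∫ u : Fin p → ℝ, |R.det| * (f (R *ᵥ u) * gaussPdf Sig (R *ᵥ u)) :=
        (integral_const_mul _ _).symm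
    _ = ∫ u : Fin p → ℝ, f (R *ᵥ u) * (rexp (-(u ⬝ᵥ u)/2) / Real.sqrt ((2*Real.pi)^p)) := by
        refine integral_congr_ae (.of_forall fun u => ?_)
        simp only [hpdf u, habs]
        field_simp

lemma gauss1_pos {m s2 y : ℝ} (hs2 : 0 < s2) : 0 < gauss1 m s2 y :=
  div_pos (Real.exp_pos _) (Real.sqrt_pos.mpr (by positivity))

/-- the inner 1-dimensional integral -/
lemma intD {s2 lam : ℝ} (hs2 : 0 < s2) (hl0 : 0 < lam) (hl1 : lam < 1) (m1 m2 : ℝ) :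
    ∫ y : ℝ, gauss1 m1 s2 y ^ lam * gauss1 m2 s2 y ^ (1 - lam)
      = rexp (-(lam*(1-lam)) * (m1 - m2)^2 / (2*s2)) := by
  have hs : 0 < Real.sqrt (2*Real.pi*s2) := Real.sqrt_pos.mpr (by positivity)
  have key : ∀ y : ℝ, gauss1 m1 s2 y ^ lam * gauss1 m2 s2 y ^ (1 - lam)
      = rexp (-(lam*(1-lam)) * (m1 - m2)^2 / (2*s2)) *
        (rexp (-(1/(2*s2)) * (y - (lam*m1 + (1-lam)*m2))^2) / Real.sqrt (2*Real.pi*s2)) := by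
    intro y
    rw [gauss1, gauss1, Real.div_rpow (Real.exp_pos _).le hs.le,
      Real.div_rpow (Real.exp_pos _).le hs.le]
    rw [div_mul_div_comm, ← Real.exp_mul, ← Real.exp_mul, ← Real.exp_add,
      ← Real.rpow_add hs, add_sub_cancel, Real.rpow_one]
    rw [mul_div_assoc', ← Real.exp_add]
    congr 1
    field_simp
    ring
  simp_rw [key]
  rw [integral_const_mul, integral_div,
    integral_sub_right_eq_self (fun z => rexp (-(1/(2*s2)) * z^2)) (lam*m1 + (1-lam)*m2),
    integral_gaussian, show Real.pi/(1/(2*s2)) = 2*Real.pi*s2 by field_simp,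
    div_self hs.ne', mul_one]

/-- pointwise rewriting of the ratio integrand -/
lemma ratio_eq {s2 lam : ℝ} (hs2 : 0 < s2) (m1 m2 y : ℝ) :
    (gauss1 m2 s2 y / gauss1 m1 s2 y) ^ (1 - lam) * gauss1 m1 s2 y
      = gauss1 m1 s2 y ^ lam * gauss1 m2 s2 y ^ (1 - lam) := by
  have h1 : 0 < gauss1 m1 s2 y := gauss1_pos hs2
  have h2 : 0 < gauss1 m2 s2 y := gauss1_pos hs2
  rw [Real.div_rpow h2.le h1.le]
  rw [show gauss1 m1 s2 y ^ lam = gauss1 m1 s2 y ^ (1 : ℝ) / gauss1 m1 s2 y ^ (1 - lam) by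
    rw [← Real.rpow_sub h1, sub_sub_cancel], Real.rpow_one]
  field_simp



/-- closed form of the Rényi divergence in the Gaussian linear regression
setting: with `q*(x) = N(x|0,Σ)` (`Σ` non-singular, `R = Σ^{1/2}` its positive
semidefinite square root), `p*(y|x) = N(y|xᵀθ*,σ²)`, `p_θ(y|x) = N(y|xᵀθ,σ²)`,
`c = σ²/(λ(1−λ))` and `θ̄' = Σ^{1/2}(θ−θ*)`:
`d_λ(p*,p_θ) = (1/(2(1−λ))) log(1 + ‖θ̄'‖²/c)`, and the normalization constant
`Z^λ_θ = ∫ q* p*^λ p_θ^{1−λ}` equals `sqrt(c/(c+‖θ̄'‖²))`. -/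
theorem stmt_14 (p : ℕ)
    (Sig R : Matrix (Fin p) (Fin p) ℝ) (hSig : Sig.PosDef)
    (hR : R.PosSemidef) (hRsq : R * R = Sig)
    (s2 lam : ℝ) (hs2 : 0 < s2) (hlam : lam ∈ Set.Ioo (0 : ℝ) 1)
    (θstar θ : Fin p → ℝ)
    (c : ℝ) (hc : c = s2 / (lam * (1 - lam)))
    (tb : Fin p → ℝ) (htb : tb = R *ᵥ (θ - θstar)) :
    -(1 / (1 - lam)) * Real.log (∫ x : Fin p → ℝ,
        (∫ y : ℝ, (gauss1 (x ⬝ᵥ θ) s2 y / gauss1 (x ⬝ᵥ θstar) s2 y) ^ (1 - lam) *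
          gauss1 (x ⬝ᵥ θstar) s2 y) * gaussPdf Sig x) =
      (1 / (2 * (1 - lam))) * Real.log (1 + (tb ⬝ᵥ tb) / c) ∧
    (∫ x : Fin p → ℝ,
        (∫ y : ℝ, gauss1 (x ⬝ᵥ θstar) s2 y ^ lam * gauss1 (x ⬝ᵥ θ) s2 y ^ (1 - lam)) *
          gaussPdf Sig x) =
      Real.sqrt (c / (c + tb ⬝ᵥ tb)) := by
  obtain ⟨hl0, hl1⟩ := hlam
  have h1l : 0 < 1 - lam := by linarith
  have hc0 : 0 < c := by rw [hc]; exact div_pos hs2 (mul_pos hl0 h1l)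
  have hv0 : 0 ≤ tb ⬝ᵥ tb := dot_self_nonneg tb
  have hcv : 0 < c + tb ⬝ᵥ tb := by linarith
  have hinner : ∀ x : Fin p → ℝ,
      (∫ y : ℝ, gauss1 (x ⬝ᵥ θstar) s2 y ^ lam * gauss1 (x ⬝ᵥ θ) s2 y ^ (1 - lam))
        = rexp (-(x ⬝ᵥ (θ - θstar))^2 / (2*c)) := by
    intro x
    rw [intD hs2 hl0 hl1]
    congr 1
    rw [dotProduct_sub, hc]
    have hl : lam * (1-lam) ≠ 0 := ne_of_gt (mul_pos hl0 h1l)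
    field_simp
    ring
  have hZ : (∫ x : Fin p → ℝ, (∫ y : ℝ, gauss1 (x ⬝ᵥ θstar) s2 y ^ lam *
        gauss1 (x ⬝ᵥ θ) s2 y ^ (1 - lam)) * gaussPdf Sig x)
      = Real.sqrt (c / (c + tb ⬝ᵥ tb)) := by
    simp_rw [hinner]
    have hfc : Continuous (fun x : Fin p → ℝ => rexp (-(x ⬝ᵥ (θ - θstar))^2 / (2*c))) :=
      Real.continuous_exp.comp (((cont_dot (θ - θstar)).pow 2).neg.div_const (2*c))
    rw [chgvar Sig R hSig hR hRsq _ hfc]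
    have hsymR : R.transpose = R := hR.isHermitian
    have hs : ∀ u : Fin p → ℝ, (R *ᵥ u) ⬝ᵥ (θ - θstar) = u ⬝ᵥ tb := fun u => by
      rw [mulVec_dot_symm hsymR, ← htb]
    simp_rw [hs]
    exact intB p hc0 tb
  constructor
  · have hratio : (∫ x : Fin p → ℝ, (∫ y : ℝ, (gauss1 (x ⬝ᵥ θ) s2 y /
        gauss1 (x ⬝ᵥ θstar) s2 y) ^ (1 - lam) * gauss1 (x ⬝ᵥ θstar) s2 y) * gaussPdf Sig x)
        = Real.sqrt (c / (c + tb ⬝ᵥ tb)) := by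
      rw [← hZ]
      refine integral_congr_ae (.of_forall fun x => ?_)
      beta_reduce
      congr 1
      exact integral_congr_ae (.of_forall fun y => ratio_eq hs2 _ _ y)
    rw [hratio]
    have h1 : c / (c + tb ⬝ᵥ tb) = (1 + tb ⬝ᵥ tb / c)⁻¹ := by
      rw [show 1 + tb ⬝ᵥ tb / c = (c + tb ⬝ᵥ tb)/c by field_simp, inv_div]
    have h2 : (1:ℝ)/(2*(1-lam)) = 1/(1-lam) * (1/2) := by
      rw [one_div, mul_inv, one_div]
      ring
    rw [h1, Real.sqrt_inv, Real.log_inv, Real.log_sqrt (by positivity), h2]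
    ring
  · exact hZ
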